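/- arXiv:2010.16128 — 3 statements merged into one kernel-verified Lean document; each statement's English description precedes it below -/
import Mathlib

section
/- Let f, g : ℝ² → ℝ be smooth and let I : ℝ² → ℝ be a C² function satisfying I_t + f I_x + (1/2)g² I_xx = 0 and g I_x = 0. If u : ℝ² → ℝ is a C² solution of the Kolmogorov backward equation -u_t = f u_x + (1/2)g² u_xx, then for every ε ∈ ℝ the function v(t,x) = exp(ε I(t,x)) · u(t,x) is also a solution of the same backward equation. -/
theorem stmt_12 (f g I : ℝ → ℝ → ℝ)
    (hf : ContDiff ℝ (⊤ : ℕ∞) (Function.uncurry f)) (hg : ContDiff ℝ (⊤ : ℕ∞) (Function.uncurry g))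
    (hI : ContDiff ℝ 2 (Function.uncurry I))
    (h1 : ∀ t x : ℝ,
      deriv (fun s => I s x) t + f t x * deriv (fun y => I t y) x +
        (1 / 2) * (g t x) ^ 2 * deriv (deriv (fun y => I t y)) x = 0)
    (h2 : ∀ t x : ℝ, g t x * deriv (fun y => I t y) x = 0)
    (u : ℝ → ℝ → ℝ) (hu : ContDiff ℝ 2 (Function.uncurry u))
    (hpde : ∀ t x : ℝ,
      -(deriv (fun s => u s x) t) =
        f t x * deriv (fun y => u t y) x +
        (1 / 2) * (g t x) ^ 2 * deriv (deriv (fun y => u t y)) x)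
    (ε : ℝ) :
    ∀ t x : ℝ,
      -(deriv (fun s => Real.exp (ε * I s x) * u s x) t) =
        f t x * deriv (fun y => Real.exp (ε * I t y) * u t y) x +
        (1 / 2) * (g t x) ^ 2 * deriv (deriv (fun y => Real.exp (ε * I t y) * u t y)) x := by
  intro t x
  -- sectional smoothness
  have hIt2 : ContDiff ℝ 2 (fun y => I t y) := hI.comp (ContDiff.prodMk contDiff_const contDiff_id : ContDiff ℝ 2 (fun y : ℝ => ((t, y) : ℝ × ℝ)))
  have hIs2 : ContDiff ℝ 2 (fun s => I s x) := hI.comp (ContDiff.prodMk contDiff_id contDiff_const : ContDiff ℝ 2 (fun s : ℝ => ((s, x) : ℝ × ℝ)))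
  have hut2 : ContDiff ℝ 2 (fun y => u t y) := hu.comp (ContDiff.prodMk contDiff_const contDiff_id : ContDiff ℝ 2 (fun y : ℝ => ((t, y) : ℝ × ℝ)))
  have hus2 : ContDiff ℝ 2 (fun s => u s x) := hu.comp (ContDiff.prodMk contDiff_id contDiff_const : ContDiff ℝ 2 (fun s : ℝ => ((s, x) : ℝ × ℝ)))
  have hIxC : Differentiable ℝ (deriv (fun y => I t y)) := by
    have h : ContDiff ℝ (1+1) (fun y => I t y) := by exact_mod_cast hIt2
    exact ((contDiff_succ_iff_deriv.mp h).2.2).differentiable (by norm_num)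
  have huxC : Differentiable ℝ (deriv (fun y => u t y)) := by
    have h : ContDiff ℝ (1+1) (fun y => u t y) := by exact_mod_cast hut2
    exact ((contDiff_succ_iff_deriv.mp h).2.2).differentiable (by norm_num)
  -- first space derivative, at every point
  have hDx : ∀ y : ℝ, HasDerivAt (fun z => Real.exp (ε * I t z) * u t z)
      (Real.exp (ε * I t y) * (ε * deriv (fun z => I t z) y) * u t y
        + Real.exp (ε * I t y) * deriv (fun z => u t z) y) y := by
    intro y
    have hI' : HasDerivAt (fun z => I t z) (deriv (fun z => I t z) y) y :=
      ((hIt2.differentiable (by norm_num)) y).hasDerivAt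
    have hu' : HasDerivAt (fun z => u t z) (deriv (fun z => u t z) y) y :=
      ((hut2.differentiable (by norm_num)) y).hasDerivAt
    exact ((hI'.const_mul ε).exp).mul hu'
  have hDxfun : deriv (fun z => Real.exp (ε * I t z) * u t z) =
      fun y => Real.exp (ε * I t y) * (ε * deriv (fun z => I t z) y) * u t y
        + Real.exp (ε * I t y) * deriv (fun z => u t z) y :=
    funext fun y => (hDx y).deriv
  -- second space derivative at x
  have hI'x : HasDerivAt (fun z => I t z) (deriv (fun z => I t z) x) x :=
    ((hIt2.differentiable (by norm_num)) x).hasDerivAt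
  have hu'x : HasDerivAt (fun z => u t z) (deriv (fun z => u t z) x) x :=
    ((hut2.differentiable (by norm_num)) x).hasDerivAt
  have hexpx : HasDerivAt (fun z => Real.exp (ε * I t z))
      (Real.exp (ε * I t x) * (ε * deriv (fun z => I t z) x)) x :=
    (hI'x.const_mul ε).exp
  have hIx' : HasDerivAt (fun z => deriv (fun w => I t w) z)
      (deriv (deriv (fun w => I t w)) x) x := (hIxC x).hasDerivAt
  have hux' : HasDerivAt (fun z => deriv (fun w => u t w) z)
      (deriv (deriv (fun w => u t w)) x) x := (huxC x).hasDerivAt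
  have hD2 : HasDerivAt
      (fun y => Real.exp (ε * I t y) * (ε * deriv (fun z => I t z) y) * u t y
        + Real.exp (ε * I t y) * deriv (fun z => u t z) y)
      ((Real.exp (ε * I t x) * (ε * deriv (fun z => I t z) x) * (ε * deriv (fun z => I t z) x)
          + Real.exp (ε * I t x) * (ε * deriv (deriv (fun w => I t w)) x)) * u t x
        + Real.exp (ε * I t x) * (ε * deriv (fun z => I t z) x) * deriv (fun z => u t z) x
        + (Real.exp (ε * I t x) * (ε * deriv (fun z => I t z) x) * deriv (fun z => u t z) x
          + Real.exp (ε * I t x) * deriv (deriv (fun w => u t w)) x)) x :=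
    ((hexpx.mul (hIx'.const_mul ε)).mul hu'x).add (hexpx.mul hux')
  have e2 : deriv (deriv (fun y => Real.exp (ε * I t y) * u t y)) x =
      (Real.exp (ε * I t x) * (ε * deriv (fun z => I t z) x) * (ε * deriv (fun z => I t z) x)
          + Real.exp (ε * I t x) * (ε * deriv (deriv (fun w => I t w)) x)) * u t x
        + Real.exp (ε * I t x) * (ε * deriv (fun z => I t z) x) * deriv (fun z => u t z) x
        + (Real.exp (ε * I t x) * (ε * deriv (fun z => I t z) x) * deriv (fun z => u t z) x
          + Real.exp (ε * I t x) * deriv (deriv (fun w => u t w)) x) := by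
    rw [hDxfun]; exact hD2.deriv
  -- time derivative at t
  have hDt : HasDerivAt (fun s => Real.exp (ε * I s x) * u s x)
      (Real.exp (ε * I t x) * (ε * deriv (fun s => I s x) t) * u t x
        + Real.exp (ε * I t x) * deriv (fun s => u s x) t) t := by
    have hI' : HasDerivAt (fun s => I s x) (deriv (fun s => I s x) t) t :=
      ((hIs2.differentiable (by norm_num)) t).hasDerivAt
    have hu' : HasDerivAt (fun s => u s x) (deriv (fun s => u s x) t) t :=
      ((hus2.differentiable (by norm_num)) t).hasDerivAt
    exact ((hI'.const_mul ε).exp).mul hu'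
  rw [hDt.deriv, (hDx x).deriv, e2]
  have hg2 : g t x ^ 2 * deriv (fun y => I t y) x = 0 := by
    have h := h2 t x
    calc g t x ^ 2 * deriv (fun y => I t y) x
        = g t x * (g t x * deriv (fun y => I t y) x) := by ring
      _ = 0 := by rw [h, mul_zero]
  linear_combination (-(Real.exp (ε * I t x) * ε * u t x)) * h1 t x
    + Real.exp (ε * I t x) * hpde t x
    + (-(1/2) * ε^2 * Real.exp (ε * I t x) * deriv (fun y => I t y) x * u t x
        - ε * Real.exp (ε * I t x) * deriv (fun y => u t y) x) * hg2
end

section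
/- Let k : (0,∞) → ℝ be C³ and satisfy k'' - (k')² = λ/x² on (0,∞) for some λ ≠ 0. If u(t,x) is a C³ solution on (0,∞) × (0,∞) of -u_t = -2k'(x) u_x + u_xx, then the function w = 2t u_t + x u_x - x k'(x) u satisfies -w_t = -2k'(x) w_x + w_xx wherever u is defined. -/
open Filter Topology Set

private lemma sliceD1 {E : Type*} [NormedAddCommGroup E] [NormedSpace ℝ E]
    {F : ℝ × ℝ → E} {t x : ℝ} (h : DifferentiableAt ℝ F (t, x)) :
    HasDerivAt (fun s => F (s, x)) (fderiv ℝ F (t, x) (1, 0)) t :=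
  h.hasFDerivAt.comp_hasDerivAt t (HasDerivAt.prodMk (hasDerivAt_id t) (hasDerivAt_const t x))

private lemma sliceD2 {E : Type*} [NormedAddCommGroup E] [NormedSpace ℝ E]
    {F : ℝ × ℝ → E} {t x : ℝ} (h : DifferentiableAt ℝ F (t, x)) :
    HasDerivAt (fun y => F (t, y)) (fderiv ℝ F (t, x) (0, 1)) x :=
  h.hasFDerivAt.comp_hasDerivAt x (HasDerivAt.prodMk (hasDerivAt_const x t) (hasDerivAt_id x))

private lemma sliceD1clm {g : ℝ × ℝ → (ℝ × ℝ →L[ℝ] ℝ)} {t x : ℝ}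
    (h : DifferentiableAt ℝ g (t, x)) (v : ℝ × ℝ) :
    HasDerivAt (fun s => g (s, x) v) (fderiv ℝ g (t, x) (1, 0) v) t := by
  simpa using (sliceD1 h).clm_apply (hasDerivAt_const t v)

private lemma sliceD2clm {g : ℝ × ℝ → (ℝ × ℝ →L[ℝ] ℝ)} {t x : ℝ}
    (h : DifferentiableAt ℝ g (t, x)) (v : ℝ × ℝ) :
    HasDerivAt (fun y => g (t, y) v) (fderiv ℝ g (t, x) (0, 1) v) x := by
  simpa using (sliceD2 h).clm_apply (hasDerivAt_const x v)

private lemma sliceD1clm2 {g : ℝ × ℝ → (ℝ × ℝ →L[ℝ] (ℝ × ℝ →L[ℝ] ℝ))} {t x : ℝ}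
    (h : DifferentiableAt ℝ g (t, x)) (v w : ℝ × ℝ) :
    HasDerivAt (fun s => g (s, x) v w) (fderiv ℝ g (t, x) (1, 0) v w) t := by
  have h1 := HasDerivAt.clm_apply (c := fun s => g (s, x)) (u := fun _ => v)
    (c' := fderiv ℝ g (t, x) (1, 0)) (u' := 0) (sliceD1 h) (hasDerivAt_const t v)
  have h2 := HasDerivAt.clm_apply (c := fun s => g (s, x) v) (u := fun _ => w)
    (c' := fderiv ℝ g (t, x) (1, 0) v + g (t, x) 0) (u' := 0) h1 (hasDerivAt_const t w)
  simpa using h2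

private lemma sliceD2clm2 {g : ℝ × ℝ → (ℝ × ℝ →L[ℝ] (ℝ × ℝ →L[ℝ] ℝ))} {t x : ℝ}
    (h : DifferentiableAt ℝ g (t, x)) (v w : ℝ × ℝ) :
    HasDerivAt (fun y => g (t, y) v w) (fderiv ℝ g (t, x) (0, 1) v w) x := by
  have h1 := HasDerivAt.clm_apply (c := fun y => g (t, y)) (u := fun _ => v)
    (c' := fderiv ℝ g (t, x) (0, 1)) (u' := 0) (sliceD2 h) (hasDerivAt_const x v)
  have h2 := HasDerivAt.clm_apply (c := fun y => g (t, y) v) (u := fun _ => w)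
    (c' := fderiv ℝ g (t, x) (0, 1) v + g (t, x) 0) (u' := 0) h1 (hasDerivAt_const x w)
  simpa using h2

theorem stmt_14 (k : ℝ → ℝ) (lam : ℝ) (hlam : lam ≠ 0)
    (hk : ContDiffOn ℝ 3 k (Set.Ioi (0 : ℝ)))
    (hkode : ∀ x : ℝ, 0 < x →
      deriv (deriv k) x - (deriv k x) ^ 2 = lam / x ^ 2)
    (u : ℝ → ℝ → ℝ)
    (hu : ContDiffOn ℝ 3 (Function.uncurry u) {p : ℝ × ℝ | 0 < p.1 ∧ 0 < p.2})
    (hpde : ∀ t x : ℝ, 0 < t → 0 < x →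
      -(deriv (fun s => u s x) t) =
        -2 * deriv k x * deriv (fun y => u t y) x +
        deriv (deriv (fun y => u t y)) x)
    (w : ℝ → ℝ → ℝ)
    (hw : ∀ t x : ℝ, w t x =
      2 * t * deriv (fun s => u s x) t + x * deriv (fun y => u t y) x -
        x * deriv k x * u t x) :
    ∀ t x : ℝ, 0 < t → 0 < x →
      -(deriv (fun s => w s x) t) =
        -2 * deriv k x * deriv (fun y => w t y) x +
        deriv (deriv (fun y => w t y)) x := by
  intro t x ht hx
  have hS : IsOpen {p : ℝ × ℝ | 0 < p.1 ∧ 0 < p.2} :=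
    (isOpen_lt continuous_const continuous_fst).inter (isOpen_lt continuous_const continuous_snd)
  have h13 : (1 : WithTop ℕ∞) ≤ 3 := by norm_num
  have h213 : (2 : WithTop ℕ∞) + 1 ≤ 3 := by norm_num
  have h112 : (1 : WithTop ℕ∞) + 1 ≤ 2 := by norm_num
  have h12 : (1 : WithTop ℕ∞) ≤ 2 := by norm_num
  have h23 : (2 : WithTop ℕ∞) ≤ 3 := by norm_num
  have hF3 : ∀ {s y : ℝ}, 0 < s → 0 < y → ContDiffAt ℝ 3 (Function.uncurry u) (s, y) := by
    intro s y hs hy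
    exact hu.contDiffAt (hS.mem_nhds ⟨hs, hy⟩)
  set G := fderiv ℝ (Function.uncurry u) with hGdef
  set H := fderiv ℝ G with hHdef
  set T := fderiv ℝ H with hTdef
  have hFd : ∀ {s y : ℝ}, 0 < s → 0 < y → DifferentiableAt ℝ (Function.uncurry u) (s, y) := by
    intro s y hs hy; exact (hF3 hs hy).differentiableAt (by norm_num)
  have hG2 : ∀ {s y : ℝ}, 0 < s → 0 < y → ContDiffAt ℝ 2 G (s, y) := by
    intro s y hs hy; exact (hF3 hs hy).fderiv_right h213
  have hGd : ∀ {s y : ℝ}, 0 < s → 0 < y → DifferentiableAt ℝ G (s, y) := by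
    intro s y hs hy; exact (hG2 hs hy).differentiableAt (by norm_num)
  have hH1 : ∀ {s y : ℝ}, 0 < s → 0 < y → ContDiffAt ℝ 1 H (s, y) := by
    intro s y hs hy; exact (hG2 hs hy).fderiv_right h112
  have hHd : ∀ {s y : ℝ}, 0 < s → 0 < y → DifferentiableAt ℝ H (s, y) := by
    intro s y hs hy; exact (hH1 hs hy).differentiableAt (by norm_num)
  -- first-order slice derivatives
  have D1 : ∀ {s y : ℝ}, 0 < s → 0 < y →
      HasDerivAt (fun s' => u s' y) (G (s, y) (1, 0)) s := by
    intro s y hs hy; exact sliceD1 (hFd hs hy)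
  have D2 : ∀ {s y : ℝ}, 0 < s → 0 < y →
      HasDerivAt (fun y' => u s y') (G (s, y) (0, 1)) y := by
    intro s y hs hy; exact sliceD2 (hFd hs hy)
  have D1G : ∀ {s y : ℝ}, 0 < s → 0 < y → ∀ v : ℝ × ℝ,
      HasDerivAt (fun s' => G (s', y) v) (H (s, y) (1, 0) v) s := by
    intro s y hs hy v; exact sliceD1clm (hGd hs hy) v
  have D2G : ∀ {s y : ℝ}, 0 < s → 0 < y → ∀ v : ℝ × ℝ,
      HasDerivAt (fun y' => G (s, y') v) (H (s, y) (0, 1) v) y := by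
    intro s y hs hy v; exact sliceD2clm (hGd hs hy) v
  have D1H : ∀ {s y : ℝ}, 0 < s → 0 < y → ∀ v w' : ℝ × ℝ,
      HasDerivAt (fun s' => H (s', y) v w') (T (s, y) (1, 0) v w') s := by
    intro s y hs hy v w'; exact sliceD1clm2 (hHd hs hy) v w'
  have D2H : ∀ {s y : ℝ}, 0 < s → 0 < y → ∀ v w' : ℝ × ℝ,
      HasDerivAt (fun y' => H (s, y') v w') (T (s, y) (0, 1) v w') y := by
    intro s y hs hy v w'; exact sliceD2clm2 (hHd hs hy) v w'
  -- deriv rewrites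
  have R1 : ∀ {s y : ℝ}, 0 < s → 0 < y → deriv (fun s' => u s' y) s = G (s, y) (1, 0) := by
    intro s y hs hy; exact (D1 hs hy).deriv
  have R2 : ∀ {s y : ℝ}, 0 < s → 0 < y → deriv (fun y' => u s y') y = G (s, y) (0, 1) := by
    intro s y hs hy; exact (D2 hs hy).deriv
  have R3 : ∀ {s y : ℝ}, 0 < s → 0 < y →
      deriv (deriv (fun y' => u s y')) y = H (s, y) (0, 1) (0, 1) := by
    intro s y hs hy
    have hev : deriv (fun y' => u s y') =ᶠ[𝓝 y] fun y' => G (s, y') (0, 1) := by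
      filter_upwards [Ioi_mem_nhds hy] with z hz
      exact R2 hs hz
    rw [hev.deriv_eq]
    exact (D2G hs hy (0, 1)).deriv
  -- the PDE in terms of G, H
  have E0 : ∀ {s y : ℝ}, 0 < s → 0 < y →
      G (s, y) (1, 0) = 2 * deriv k y * G (s, y) (0, 1) - H (s, y) (0, 1) (0, 1) := by
    intro s y hs hy
    have h := hpde s y hs hy
    rw [R1 hs hy, R2 hs hy, R3 hs hy] at h
    linarith
  -- k facts
  have hk2 : ContDiffOn ℝ 2 (deriv k) (Set.Ioi 0) := hk.deriv_of_isOpen isOpen_Ioi h213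
  have hk1 : ContDiffOn ℝ 1 (deriv (deriv k)) (Set.Ioi 0) := hk2.deriv_of_isOpen isOpen_Ioi h112
  have hdk : ∀ {y : ℝ}, 0 < y → HasDerivAt (deriv k) (deriv (deriv k) y) y := by
    intro y hy
    exact ((hk2.contDiffAt (Ioi_mem_nhds hy)).differentiableAt (by norm_num)).hasDerivAt
  have hddk : HasDerivAt (deriv (deriv k)) (deriv (deriv (deriv k)) x) x :=
    ((hk1.contDiffAt (Ioi_mem_nhds hx)).differentiableAt (by norm_num)).hasDerivAt
  -- derivative of the PDE in t
  have e2 : H (t, x) (1, 0) (1, 0) =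
      2 * deriv k x * H (t, x) (1, 0) (0, 1) - T (t, x) (1, 0) (0, 1) (0, 1) := by
    have hL := D1G ht hx ((1 : ℝ), (0 : ℝ))
    have hR : HasDerivAt
        (fun s' => 2 * deriv k x * G (s', x) (0, 1) - H (s', x) (0, 1) (0, 1))
        (2 * deriv k x * H (t, x) (1, 0) (0, 1) - T (t, x) (1, 0) (0, 1) (0, 1)) t :=
      ((D1G ht hx ((0 : ℝ), (1 : ℝ))).const_mul _).sub (D1H ht hx _ _)
    have hev : (fun s' => G (s', x) (1, 0)) =ᶠ[𝓝 t]
        fun s' => 2 * deriv k x * G (s', x) (0, 1) - H (s', x) (0, 1) (0, 1) := by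
      filter_upwards [Ioi_mem_nhds ht] with s hs
      exact E0 hs hx
    exact hL.unique (hR.congr_of_eventuallyEq hev)
  -- derivative of the PDE in x
  have e3 : H (t, x) (0, 1) (1, 0) =
      (2 * deriv (deriv k) x) * G (t, x) (0, 1) + 2 * deriv k x * H (t, x) (0, 1) (0, 1)
        - T (t, x) (0, 1) (0, 1) (0, 1) := by
    have hL := D2G ht hx ((1 : ℝ), (0 : ℝ))
    have hmul : HasDerivAt (fun y' : ℝ => 2 * deriv k y') (2 * deriv (deriv k) x) x :=
      (hdk hx).const_mul 2
    have hR : HasDerivAt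
        (fun y' => 2 * deriv k y' * G (t, y') (0, 1) - H (t, y') (0, 1) (0, 1))
        ((2 * deriv (deriv k) x) * G (t, x) (0, 1) + 2 * deriv k x * H (t, x) (0, 1) (0, 1)
          - T (t, x) (0, 1) (0, 1) (0, 1)) x :=
      (hmul.mul (D2G ht hx ((0 : ℝ), (1 : ℝ)))).sub (D2H ht hx _ _)
    have hev : (fun y' => G (t, y') (1, 0)) =ᶠ[𝓝 x]
        fun y' => 2 * deriv k y' * G (t, y') (0, 1) - H (t, y') (0, 1) (0, 1) := by
      filter_upwards [Ioi_mem_nhds hx] with z hz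
      exact E0 ht hz
    exact hL.unique (hR.congr_of_eventuallyEq hev)
  -- symmetry facts
  have e4 : H (t, x) (1, 0) (0, 1) = H (t, x) (0, 1) (1, 0) :=
    (hF3 ht hx).isSymmSndFDerivAt (by simpa using h23) (1, 0) (0, 1)
  have e5 : T (t, x) (0, 1) (0, 1) (1, 0) = T (t, x) (0, 1) (1, 0) (0, 1) := by
    have hL := D2H ht hx ((0 : ℝ), (1 : ℝ)) ((1 : ℝ), (0 : ℝ))
    have hR := D2H ht hx ((1 : ℝ), (0 : ℝ)) ((0 : ℝ), (1 : ℝ))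
    have hev : (fun y' => H (t, y') (0, 1) (1, 0)) =ᶠ[𝓝 x]
        fun y' => H (t, y') (1, 0) (0, 1) := by
      filter_upwards [Ioi_mem_nhds hx] with z hz
      exact ((hF3 ht hz).isSymmSndFDerivAt (by simpa using h23) (0, 1) (1, 0))
    exact hL.unique (hR.congr_of_eventuallyEq hev)
  have e6 : T (t, x) (0, 1) (1, 0) (0, 1) = T (t, x) (1, 0) (0, 1) (0, 1) := by
    have hs := (hG2 ht hx).isSymmSndFDerivAt (by simp)
    have h := hs (0, 1) (1, 0)
    exact congrArg (fun L : ℝ × ℝ →L[ℝ] ℝ => L ((0 : ℝ), (1 : ℝ))) h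
  -- ODE facts for k
  have hx2ne : (x : ℝ) ^ 2 ≠ 0 := pow_ne_zero 2 hx.ne'
  have e7 : x ^ 2 * deriv (deriv k) x - x ^ 2 * (deriv k x) ^ 2 = lam := by
    have h := hkode x hx
    field_simp at h
    linarith
  have e8 : x ^ 3 * deriv (deriv (deriv k)) x =
      2 * deriv k x * deriv (deriv k) x * x ^ 3 - 2 * lam := by
    have hder : HasDerivAt (fun y : ℝ => deriv (deriv k) y - (deriv k y) ^ 2)
        (deriv (deriv (deriv k)) x - 2 * deriv k x * deriv (deriv k) x) x := by
      have h2 := (hdk hx).fun_pow 2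
      exact hddk.sub (by simpa [mul_comm, mul_assoc, mul_left_comm] using h2)
    have hder2 : HasDerivAt (fun y : ℝ => lam / y ^ 2) (-2 * lam / x ^ 3) x := by
      have h1 : HasDerivAt (fun y : ℝ => y ^ 2) (2 * x) x := by
        simpa using hasDerivAt_pow 2 x
      have h2 := (h1.inv (pow_ne_zero 2 hx.ne')).const_mul lam
      have hval : lam * (-(2 * x) / ((x : ℝ) ^ 2) ^ 2) = -2 * lam / x ^ 3 := by
        field_simp
      rw [← hval]
      simpa [div_eq_mul_inv] using h2
    have hevk : (fun y : ℝ => deriv (deriv k) y - (deriv k y) ^ 2) =ᶠ[𝓝 x]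
        fun y : ℝ => lam / y ^ 2 := by
      filter_upwards [Ioi_mem_nhds hx] with z hz
      exact hkode z hz
    have h := hder.unique (hder2.congr_of_eventuallyEq hevk)
    field_simp at h
    linarith
  -- time derivative of w
  have hwev : (fun s => w s x) =ᶠ[𝓝 t]
      fun s => 2 * s * G (s, x) (1, 0) + x * G (s, x) (0, 1) - x * deriv k x * u s x := by
    filter_upwards [Ioi_mem_nhds ht] with s hs
    rw [hw s x, R1 hs hx, R2 hs hx]
  have hgL : HasDerivAt
      (fun s => 2 * s * G (s, x) (1, 0) + x * G (s, x) (0, 1) - x * deriv k x * u s x)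
      (2 * G (t, x) (1, 0) + 2 * t * H (t, x) (1, 0) (1, 0) + x * H (t, x) (1, 0) (0, 1)
        - x * deriv k x * G (t, x) (1, 0)) t := by
    have h1 : HasDerivAt (fun s : ℝ => 2 * s) 2 t := by
      simpa using (hasDerivAt_id t).const_mul 2
    exact ((h1.mul (D1G ht hx (1, 0))).add ((D1G ht hx (0, 1)).const_mul x)).sub
      ((D1 ht hx).const_mul (x * deriv k x))
  have gL : deriv (fun s => w s x) t =
      2 * G (t, x) (1, 0) + 2 * t * H (t, x) (1, 0) (1, 0) + x * H (t, x) (1, 0) (0, 1)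
        - x * deriv k x * G (t, x) (1, 0) := by
    rw [hwev.deriv_eq]; exact hgL.deriv
  -- spatial derivative of w at an arbitrary point
  have hwx : ∀ y : ℝ, 0 < y → HasDerivAt (fun y' => w t y')
      (2 * t * H (t, y) (0, 1) (1, 0)
        + (1 * G (t, y) (0, 1) + y * H (t, y) (0, 1) (0, 1))
        - ((1 * deriv k y + y * deriv (deriv k) y) * u t y
            + y * deriv k y * G (t, y) (0, 1))) y := by
    intro y hy
    have hev : (fun y' => w t y') =ᶠ[𝓝 y]
        fun y' => 2 * t * G (t, y') (1, 0) + y' * G (t, y') (0, 1)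
          - y' * deriv k y' * u t y' := by
      filter_upwards [Ioi_mem_nhds hy] with z hz
      rw [hw t z, R1 ht hz, R2 ht hz]
    apply HasDerivAt.congr_of_eventuallyEq _ hev
    have h1 : HasDerivAt (fun y' => 2 * t * G (t, y') (1, 0))
        (2 * t * H (t, y) (0, 1) (1, 0)) y := (D2G ht hy (1, 0)).const_mul (2 * t)
    have h2 : HasDerivAt (fun y' => y' * G (t, y') (0, 1))
        (1 * G (t, y) (0, 1) + y * H (t, y) (0, 1) (0, 1)) y :=
      (hasDerivAt_id' y).mul (D2G ht hy (0, 1))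
    have h3 : HasDerivAt (fun y' => y' * deriv k y' * u t y')
        ((1 * deriv k y + y * deriv (deriv k) y) * u t y
          + y * deriv k y * G (t, y) (0, 1)) y :=
      ((hasDerivAt_id' y).mul (hdk hy)).mul (D2 ht hy)
    exact (h1.add h2).sub h3
  have gX : deriv (fun y => w t y) x =
      2 * t * H (t, x) (0, 1) (1, 0)
        + (1 * G (t, x) (0, 1) + x * H (t, x) (0, 1) (0, 1))
        - ((1 * deriv k x + x * deriv (deriv k) x) * u t x
            + x * deriv k x * G (t, x) (0, 1)) := (hwx x hx).deriv
  -- second spatial derivative of w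
  have hev2 : deriv (fun y => w t y) =ᶠ[𝓝 x] fun y =>
      2 * t * H (t, y) (0, 1) (1, 0)
        + (1 * G (t, y) (0, 1) + y * H (t, y) (0, 1) (0, 1))
        - ((1 * deriv k y + y * deriv (deriv k) y) * u t y
            + y * deriv k y * G (t, y) (0, 1)) := by
    filter_upwards [Ioi_mem_nhds hx] with z hz
    exact (hwx z hz).deriv
  have hbig : HasDerivAt (fun y =>
      2 * t * H (t, y) (0, 1) (1, 0)
        + (1 * G (t, y) (0, 1) + y * H (t, y) (0, 1) (0, 1))
        - ((1 * deriv k y + y * deriv (deriv k) y) * u t y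
            + y * deriv k y * G (t, y) (0, 1)))
      (2 * t * T (t, x) (0, 1) (0, 1) (1, 0)
        + (1 * H (t, x) (0, 1) (0, 1)
            + (1 * H (t, x) (0, 1) (0, 1) + x * T (t, x) (0, 1) (0, 1) (0, 1)))
        - (((1 * deriv (deriv k) x + (1 * deriv (deriv k) x + x * deriv (deriv (deriv k)) x))
              * u t x
            + (1 * deriv k x + x * deriv (deriv k) x) * G (t, x) (0, 1))
          + ((1 * deriv k x + x * deriv (deriv k) x) * G (t, x) (0, 1)
            + x * deriv k x * H (t, x) (0, 1) (0, 1)))) x := by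
    have hA : HasDerivAt (fun y => 2 * t * H (t, y) (0, 1) (1, 0))
        (2 * t * T (t, x) (0, 1) (0, 1) (1, 0)) x :=
      (D2H ht hx (0, 1) (1, 0)).const_mul (2 * t)
    have hB : HasDerivAt (fun y => 1 * G (t, y) (0, 1) + y * H (t, y) (0, 1) (0, 1))
        (1 * H (t, x) (0, 1) (0, 1)
          + (1 * H (t, x) (0, 1) (0, 1) + x * T (t, x) (0, 1) (0, 1) (0, 1))) x :=
      ((D2G ht hx (0, 1)).const_mul 1).add ((hasDerivAt_id' x).mul (D2H ht hx (0, 1) (0, 1)))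
    have hC1 : HasDerivAt (fun y => (1 * deriv k y + y * deriv (deriv k) y) * u t y)
        ((1 * deriv (deriv k) x + (1 * deriv (deriv k) x + x * deriv (deriv (deriv k)) x))
            * u t x
          + (1 * deriv k x + x * deriv (deriv k) x) * G (t, x) (0, 1)) x :=
      (((hdk hx).const_mul 1).add ((hasDerivAt_id' x).mul hddk)).mul (D2 ht hx)
    have hC2 : HasDerivAt (fun y => y * deriv k y * G (t, y) (0, 1))
        ((1 * deriv k x + x * deriv (deriv k) x) * G (t, x) (0, 1)
          + x * deriv k x * H (t, x) (0, 1) (0, 1)) x :=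
      ((hasDerivAt_id' x).mul (hdk hx)).mul (D2G ht hx (0, 1))
    exact (hA.add hB).sub (hC1.add hC2)
  have gXX : deriv (deriv (fun y => w t y)) x =
      2 * t * T (t, x) (0, 1) (0, 1) (1, 0)
        + (1 * H (t, x) (0, 1) (0, 1)
            + (1 * H (t, x) (0, 1) (0, 1) + x * T (t, x) (0, 1) (0, 1) (0, 1)))
        - (((1 * deriv (deriv k) x + (1 * deriv (deriv k) x + x * deriv (deriv (deriv k)) x))
              * u t x
            + (1 * deriv k x + x * deriv (deriv k) x) * G (t, x) (0, 1))
          + ((1 * deriv k x + x * deriv (deriv k) x) * G (t, x) (0, 1)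
            + x * deriv k x * H (t, x) (0, 1) (0, 1))) := by
    rw [hev2.deriv_eq]; exact hbig.deriv
  -- put everything together
  have e0 := E0 ht hx
  rw [gL, gX, gXX]
  apply mul_left_cancel₀ hx2ne
  linear_combination ((x * deriv k x - 2) * x ^ 2) * e0 + (-(2 * t * x ^ 2)) * e2
    + (-(x ^ 3)) * e3 + (-(x ^ 3) - 4 * deriv k x * t * x ^ 2) * e4
    + (-(2 * t * x ^ 2)) * e5 + (-(2 * t * x ^ 2)) * e6
    + (2 * u t x) * e7 + (u t x) * e8
end

section
/- Let f, G be constants, and let τ(t), ξ(t,x), φ(t,x) be smooth. Suppose the vector field X_KB = τ∂_t + ξ∂_x + φu∂_u is a symmetry of the backward equation u_t + (1/2)G u_xx + f u_x = 0 in the sense that for every C³ solution u of u_t + (1/2)G u_xx + f u_x = 0, the function w = φu - τu_t - ξu_x also solves the equation. Then, with τ independent of x and χ := -φ - ξ_x, the vector field X_KF = τ∂_t + ξ∂_x + χu∂_u is a symmetry of the forward equation v_t = -(f v)_x + (1/2)(G v)_xx = -f v_x + (1/2)G v_xx in the same sense: for every C³ solution v of v_t = -f v_x + (1/2)G v_xx,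 the function z = χv - τv_t - ξv_x also solves it. -/
open Function

noncomputable def pd (w : ℝ × ℝ) (A : ℝ × ℝ → ℝ) : ℝ × ℝ → ℝ :=
  fun p => fderiv ℝ A p w

theorem pd_contDiff {n m : WithTop ℕ∞} {A : ℝ × ℝ → ℝ} (h : ContDiff ℝ n A)
    (hm : m + 1 ≤ n) (w : ℝ × ℝ) : ContDiff ℝ m (pd w A) := by
  have h1 : ContDiff ℝ m (fderiv ℝ A) := h.fderiv_right hm
  exact ((ContinuousLinearMap.apply ℝ ℝ w).contDiff).comp h1

theorem hasDerivAt_slice1 {A : ℝ × ℝ → ℝ} {t x : ℝ} (h : DifferentiableAt ℝ A (t, x)) :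
    HasDerivAt (fun s => A (s, x)) (pd (1, 0) A (t, x)) t := by
  have h1 : HasDerivAt (fun s : ℝ => (s, x)) ((1 : ℝ), (0 : ℝ)) t :=
    (hasDerivAt_id t).prodMk (hasDerivAt_const t x)
  exact h.hasFDerivAt.comp_hasDerivAt t h1

theorem hasDerivAt_slice2 {A : ℝ × ℝ → ℝ} {t x : ℝ} (h : DifferentiableAt ℝ A (t, x)) :
    HasDerivAt (fun y => A (t, y)) (pd (0, 1) A (t, x)) x := by
  have h1 : HasDerivAt (fun y : ℝ => (t, y)) ((0 : ℝ), (1 : ℝ)) x :=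
    (hasDerivAt_const x t).prodMk (hasDerivAt_id' _)
  exact h.hasFDerivAt.comp_hasDerivAt x h1

theorem deriv_slice1 {A : ℝ × ℝ → ℝ} {t x : ℝ} (h : DifferentiableAt ℝ A (t, x)) :
    deriv (fun s => A (s, x)) t = pd (1, 0) A (t, x) := (hasDerivAt_slice1 h).deriv

theorem deriv_slice2 {A : ℝ × ℝ → ℝ} {t x : ℝ} (h : DifferentiableAt ℝ A (t, x)) :
    deriv (fun y => A (t, y)) x = pd (0, 1) A (t, x) := (hasDerivAt_slice2 h).deriv

theorem pd_add {A B : ℝ × ℝ → ℝ} {p : ℝ × ℝ} (hA : DifferentiableAt ℝ A p)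
    (hB : DifferentiableAt ℝ B p) (w : ℝ × ℝ) :
    pd w (fun q => A q + B q) p = pd w A p + pd w B p := by
  simp [pd, fderiv_fun_add hA hB]

theorem pd_sub {A B : ℝ × ℝ → ℝ} {p : ℝ × ℝ} (hA : DifferentiableAt ℝ A p)
    (hB : DifferentiableAt ℝ B p) (w : ℝ × ℝ) :
    pd w (fun q => A q - B q) p = pd w A p - pd w B p := by
  simp [pd, fderiv_fun_sub hA hB]

theorem pd_neg {A : ℝ × ℝ → ℝ} {p : ℝ × ℝ} (w : ℝ × ℝ) :
    pd w (fun q => -A q) p = -pd w A p := by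
  simp [pd, fderiv_neg]

theorem pd_mul {A B : ℝ × ℝ → ℝ} {p : ℝ × ℝ} (hA : DifferentiableAt ℝ A p)
    (hB : DifferentiableAt ℝ B p) (w : ℝ × ℝ) :
    pd w (fun q => A q * B q) p = pd w A p * B p + A p * pd w B p := by
  have := fderiv_fun_mul hA hB
  simp [pd, this]
  ring

theorem pd_const_mul {B : ℝ × ℝ → ℝ} {p : ℝ × ℝ} (hB : DifferentiableAt ℝ B p) (c : ℝ)
    (w : ℝ × ℝ) : pd w (fun q => c * B q) p = c * pd w B p := by
  have := (hB.hasFDerivAt.const_mul c).fderiv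
  simp [pd, this]

theorem pd_const {p : ℝ × ℝ} (w : ℝ × ℝ) (c : ℝ) : pd w (fun _ => c) p = 0 := by
  simp [pd]

theorem pd_fst {p : ℝ × ℝ} (w : ℝ × ℝ) : pd w (fun q => q.1) p = w.1 := by
  simp [pd, fderiv_fst]

theorem pd_snd {p : ℝ × ℝ} (w : ℝ × ℝ) : pd w (fun q => q.2) p = w.2 := by
  simp [pd, fderiv_snd]

theorem pd_comp_fst {g : ℝ → ℝ} {p : ℝ × ℝ} (hg : DifferentiableAt ℝ g p.1) (w : ℝ × ℝ) :
    pd w (fun q => g q.1) p = deriv g p.1 * w.1 := by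
  have h1 : HasFDerivAt (fun q : ℝ × ℝ => q.1) (ContinuousLinearMap.fst ℝ ℝ ℝ) p :=
    hasFDerivAt_fst
  have h2 := hg.hasDerivAt.comp_hasFDerivAt p h1
  have h3 : fderiv ℝ (fun q : ℝ × ℝ => g q.1) p = deriv g p.1 • ContinuousLinearMap.fst ℝ ℝ ℝ := by
    have : (fun q : ℝ × ℝ => g q.1) = g ∘ Prod.fst := rfl
    rw [this, h2.fderiv]
  simp [pd, h3]

theorem pd_congr {A B : ℝ × ℝ → ℝ} (h : ∀ q, A q = B q) (w : ℝ × ℝ) (p : ℝ × ℝ) :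
    pd w A p = pd w B p := by
  have : A = B := funext h
  rw [pd, pd, this]

theorem pd_pd_const {p : ℝ × ℝ} (v w : ℝ × ℝ) (c : ℝ) :
    pd v (pd w (fun _ => c)) p = 0 := by
  have h : ∀ q : ℝ × ℝ, pd w (fun _ : ℝ × ℝ => c) q = 0 := fun q => pd_const w c
  rw [pd_congr h v p, pd_const]


theorem pd_pd {A : ℝ × ℝ → ℝ} (h : ContDiff ℝ 2 A) (v w : ℝ × ℝ) (p : ℝ × ℝ) :
    pd v (pd w A) p = fderiv ℝ (fderiv ℝ A) p v w := by
  have hd : DifferentiableAt ℝ (fderiv ℝ A) p := by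
    have : ContDiff ℝ 1 (fderiv ℝ A) := h.fderiv_right (by norm_num)
    exact (this.differentiable one_ne_zero) p
  have h2 : HasFDerivAt (pd w A)
      ((ContinuousLinearMap.apply ℝ ℝ w).comp (fderiv ℝ (fderiv ℝ A) p)) p :=
    (ContinuousLinearMap.apply ℝ ℝ w).hasFDerivAt.comp p hd.hasFDerivAt
  have := h2.fderiv
  simp [pd, this]

theorem pd_comm {A : ℝ × ℝ → ℝ} (h : ContDiff ℝ 2 A) (v w : ℝ × ℝ) (p : ℝ × ℝ) :
    pd v (pd w A) p = pd w (pd v A) p := by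
  rw [pd_pd h v w p, pd_pd h w v p]
  exact (h.contDiffAt.isSymmSndFDerivAt (by norm_num)) v w

open scoped ContDiff

theorem wle_infty (n : ℕ∞) : (n : WithTop ℕ∞) ≤ ∞ := WithTop.coe_le_coe.mpr le_top

noncomputable def Zfun (f : ℝ) (τ : ℝ → ℝ) (Φ Ξ U : ℝ × ℝ → ℝ) : ℝ × ℝ → ℝ :=
  fun q => (-Φ q - pd (0, 1) Ξ q) * U q - τ q.1 * pd (1, 0) U q - Ξ q * pd (0, 1) U q

theorem forward_calc (f G : ℝ) (τ : ℝ → ℝ) (Φ Ξ U : ℝ × ℝ → ℝ)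
    (hτ : ContDiff ℝ ∞ τ) (hΞ : ContDiff ℝ ∞ Ξ) (hΦ : ContDiff ℝ ∞ Φ)
    (hU : ContDiff ℝ 3 U)
    (hA : ∀ p, pd (1, 0) Φ p + (1 / 2) * G * pd (0, 1) (pd (0, 1) Φ) p + f * pd (0, 1) Φ p = 0)
    (hB : ∀ p, G * pd (0, 1) Φ p + f * deriv τ p.1 -
        (pd (1, 0) Ξ p + (1 / 2) * G * pd (0, 1) (pd (0, 1) Ξ) p + f * pd (0, 1) Ξ p) = 0)
    (hC : ∀ p, (1 / 2) * G * deriv τ p.1 - G * pd (0, 1) Ξ p = 0)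
    (hV : ∀ p, pd (1, 0) U p = -f * pd (0, 1) U p + (1 / 2) * G * pd (0, 1) (pd (0, 1) U) p) :
    ∀ p, pd (1, 0) (Zfun f τ Φ Ξ U) p =
      -f * pd (0, 1) (Zfun f τ Φ Ξ U) p +
        (1 / 2) * G * pd (0, 1) (pd (0, 1) (Zfun f τ Φ Ξ U)) p := by
  have i1 : (1 : WithTop ℕ∞) + 1 ≤ ∞ := by exact (WithTop.coe_le_coe.mpr (le_top : ((1:ℕ∞)+1) ≤ ⊤))
  have i2 : (2 : WithTop ℕ∞) + 1 ≤ 3 := by norm_num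
  have i3 : (1 : WithTop ℕ∞) + 1 ≤ 2 := by norm_num
  have i4 : (0 : WithTop ℕ∞) + 1 ≤ 1 := by norm_num
  -- smoothness stock
  have hτ' : ContDiff ℝ ∞ (deriv τ) := (contDiff_infty_iff_deriv.mp hτ).2
  have hΦx : ContDiff ℝ ∞ (pd (0, 1) Φ) := pd_contDiff hΦ (by simp) _
  have hΦt : ContDiff ℝ ∞ (pd (1, 0) Φ) := pd_contDiff hΦ (by simp) _
  have hΦxx : ContDiff ℝ ∞ (pd (0, 1) (pd (0, 1) Φ)) := pd_contDiff hΦx (by simp) _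
  have hΞx : ContDiff ℝ ∞ (pd (0, 1) Ξ) := pd_contDiff hΞ (by simp) _
  have hΞt : ContDiff ℝ ∞ (pd (1, 0) Ξ) := pd_contDiff hΞ (by simp) _
  have hΞxx : ContDiff ℝ ∞ (pd (0, 1) (pd (0, 1) Ξ)) := pd_contDiff hΞx (by simp) _
  have hΞtx : ContDiff ℝ ∞ (pd (0, 1) (pd (1, 0) Ξ)) := pd_contDiff hΞt (by simp) _
  have hΞxxx : ContDiff ℝ ∞ (pd (0, 1) (pd (0, 1) (pd (0, 1) Ξ))) := pd_contDiff hΞxx (by simp) _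
  have hUx : ContDiff ℝ 2 (pd (0, 1) U) := pd_contDiff hU i2 _
  have hUt : ContDiff ℝ 2 (pd (1, 0) U) := pd_contDiff hU i2 _
  have hUxx : ContDiff ℝ 1 (pd (0, 1) (pd (0, 1) U)) := pd_contDiff hUx i3 _
  have hUtx : ContDiff ℝ 1 (pd (0, 1) (pd (1, 0) U)) := pd_contDiff hUt i3 _
  -- differentiability stock
  have dτ : ∀ s : ℝ, DifferentiableAt ℝ τ s := fun s => (hτ.differentiable (by simp)) s
  have dτ' : ∀ s : ℝ, DifferentiableAt ℝ (deriv τ) s := fun s => (hτ'.differentiable (by simp)) s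
  have dT : ∀ p : ℝ × ℝ, DifferentiableAt ℝ (fun q : ℝ × ℝ => τ q.1) p := fun p =>
    (dτ p.1).comp p differentiableAt_fst
  have dΦ : ∀ p, DifferentiableAt ℝ Φ p := fun p => (hΦ.differentiable (by simp)) p
  have dΦx : ∀ p, DifferentiableAt ℝ (pd (0, 1) Φ) p := fun p => (hΦx.differentiable (by simp)) p
  have dΞ : ∀ p, DifferentiableAt ℝ Ξ p := fun p => (hΞ.differentiable (by simp)) p
  have dΞx : ∀ p, DifferentiableAt ℝ (pd (0, 1) Ξ) p := fun p => (hΞx.differentiable (by simp)) p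
  have dΞxx : ∀ p, DifferentiableAt ℝ (pd (0, 1) (pd (0, 1) Ξ)) p := fun p =>
    (hΞxx.differentiable (by simp)) p
  have dU : ∀ p, DifferentiableAt ℝ U p := fun p => (hU.differentiable (by norm_num)) p
  have dUx : ∀ p, DifferentiableAt ℝ (pd (0, 1) U) p := fun p => (hUx.differentiable (by norm_num)) p
  have dUt : ∀ p, DifferentiableAt ℝ (pd (1, 0) U) p := fun p => (hUt.differentiable (by norm_num)) p
  have dUxx : ∀ p, DifferentiableAt ℝ (pd (0, 1) (pd (0, 1) U)) p := fun p =>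
    (hUxx.differentiable (by norm_num)) p
  have dUtx : ∀ p, DifferentiableAt ℝ (pd (0, 1) (pd (1, 0) U)) p := fun p =>
    (hUtx.differentiable (by norm_num)) p
  -- differentiability of the three summands of Z
  have dc : ∀ p, DifferentiableAt ℝ (fun q => -Φ q - pd (0, 1) Ξ q) p := fun p =>
    ((dΦ p).fun_neg).fun_sub (dΞx p)
  have dZ1 : ∀ p, DifferentiableAt ℝ (fun q => (-Φ q - pd (0, 1) Ξ q) * U q) p := fun p =>
    (dc p).fun_mul (dU p)
  have dZ2 : ∀ p, DifferentiableAt ℝ (fun q => τ q.1 * pd (1, 0) U q) p := fun p =>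
    (dT p).fun_mul (dUt p)
  have dZ3 : ∀ p, DifferentiableAt ℝ (fun q => Ξ q * pd (0, 1) U q) p := fun p =>
    (dΞ p).fun_mul (dUx p)
  have dZ12 : ∀ p, DifferentiableAt ℝ
      (fun q => (-Φ q - pd (0, 1) Ξ q) * U q - τ q.1 * pd (1, 0) U q) p := fun p =>
    (dZ1 p).fun_sub (dZ2 p)
  -- expansion of first derivatives of Z
  have hZt : ∀ p, pd (1, 0) (Zfun f τ Φ Ξ U) p =
      (-pd (1, 0) Φ p - pd (1, 0) (pd (0, 1) Ξ) p) * U p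
        + (-Φ p - pd (0, 1) Ξ p) * pd (1, 0) U p
        - (deriv τ p.1 * pd (1, 0) U p + τ p.1 * pd (1, 0) (pd (1, 0) U) p)
        - (pd (1, 0) Ξ p * pd (0, 1) U p + Ξ p * pd (1, 0) (pd (0, 1) U) p) := by
    intro p
    rw [show Zfun f τ Φ Ξ U = fun q =>
      ((-Φ q - pd (0, 1) Ξ q) * U q - τ q.1 * pd (1, 0) U q) - Ξ q * pd (0, 1) U q from rfl]
    rw [pd_sub (dZ12 p) (dZ3 p), pd_sub (dZ1 p) (dZ2 p), pd_mul (dc p) (dU p),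
      pd_mul (dT p) (dUt p), pd_mul (dΞ p) (dUx p), pd_sub ((dΦ p).fun_neg) (dΞx p),
      pd_neg, pd_comp_fst (dτ p.1)]
    ring
  have hZx : ∀ p, pd (0, 1) (Zfun f τ Φ Ξ U) p =
      (-pd (0, 1) Φ p - pd (0, 1) (pd (0, 1) Ξ) p) * U p
        + (-Φ p - pd (0, 1) Ξ p) * pd (0, 1) U p
        - τ p.1 * pd (0, 1) (pd (1, 0) U) p
        - (pd (0, 1) Ξ p * pd (0, 1) U p + Ξ p * pd (0, 1) (pd (0, 1) U) p) := by
    intro p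
    rw [show Zfun f τ Φ Ξ U = fun q =>
      ((-Φ q - pd (0, 1) Ξ q) * U q - τ q.1 * pd (1, 0) U q) - Ξ q * pd (0, 1) U q from rfl]
    rw [pd_sub (dZ12 p) (dZ3 p), pd_sub (dZ1 p) (dZ2 p), pd_mul (dc p) (dU p),
      pd_mul (dT p) (dUt p), pd_mul (dΞ p) (dUx p), pd_sub ((dΦ p).fun_neg) (dΞx p),
      pd_neg, pd_comp_fst (dτ p.1)]
    ring
  -- second x derivative of Z
  have dW1 : ∀ p, DifferentiableAt ℝ
      (fun q => (-pd (0, 1) Φ q - pd (0, 1) (pd (0, 1) Ξ) q) * U q) p := fun p =>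
    (((dΦx p).fun_neg).fun_sub (dΞxx p)).fun_mul (dU p)
  have dW2 : ∀ p, DifferentiableAt ℝ (fun q => (-Φ q - pd (0, 1) Ξ q) * pd (0, 1) U q) p :=
    fun p => (dc p).fun_mul (dUx p)
  have dW3 : ∀ p, DifferentiableAt ℝ (fun q => τ q.1 * pd (0, 1) (pd (1, 0) U) q) p := fun p =>
    (dT p).fun_mul (dUtx p)
  have dW4 : ∀ p, DifferentiableAt ℝ
      (fun q => pd (0, 1) Ξ q * pd (0, 1) U q + Ξ q * pd (0, 1) (pd (0, 1) U) q) p := fun p =>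
    ((dΞx p).fun_mul (dUx p)).fun_add ((dΞ p).fun_mul (dUxx p))
  have hZxx : ∀ p, pd (0, 1) (pd (0, 1) (Zfun f τ Φ Ξ U)) p =
      ((-pd (0, 1) (pd (0, 1) Φ) p - pd (0, 1) (pd (0, 1) (pd (0, 1) Ξ)) p) * U p
          + (-pd (0, 1) Φ p - pd (0, 1) (pd (0, 1) Ξ) p) * pd (0, 1) U p)
        + ((-pd (0, 1) Φ p - pd (0, 1) (pd (0, 1) Ξ) p) * pd (0, 1) U p
          + (-Φ p - pd (0, 1) Ξ p) * pd (0, 1) (pd (0, 1) U) p)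
        - τ p.1 * pd (0, 1) (pd (0, 1) (pd (1, 0) U)) p
        - ((pd (0, 1) (pd (0, 1) Ξ) p * pd (0, 1) U p + pd (0, 1) Ξ p * pd (0, 1) (pd (0, 1) U) p)
          + (pd (0, 1) Ξ p * pd (0, 1) (pd (0, 1) U) p + Ξ p * pd (0, 1) (pd (0, 1) (pd (0, 1) U)) p)) := by
    intro p
    rw [pd_congr hZx (0, 1) p]
    rw [show (fun p => (-pd (0, 1) Φ p - pd (0, 1) (pd (0, 1) Ξ) p) * U p
        + (-Φ p - pd (0, 1) Ξ p) * pd (0, 1) U p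
        - τ p.1 * pd (0, 1) (pd (1, 0) U) p
        - (pd (0, 1) Ξ p * pd (0, 1) U p + Ξ p * pd (0, 1) (pd (0, 1) U) p)) = fun q =>
        (((fun q => (-pd (0, 1) Φ q - pd (0, 1) (pd (0, 1) Ξ) q) * U q) q
          + (fun q => (-Φ q - pd (0, 1) Ξ q) * pd (0, 1) U q) q)
          - (fun q => τ q.1 * pd (0, 1) (pd (1, 0) U) q) q)
          - (fun q => pd (0, 1) Ξ q * pd (0, 1) U q + Ξ q * pd (0, 1) (pd (0, 1) U) q) q from rfl]
    rw [pd_sub (((dW1 p).fun_add (dW2 p)).fun_sub (dW3 p)) (dW4 p),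
      pd_sub ((dW1 p).fun_add (dW2 p)) (dW3 p), pd_add (dW1 p) (dW2 p),
      pd_mul (((dΦx p).fun_neg).fun_sub (dΞxx p)) (dU p), pd_mul (dc p) (dUx p),
      pd_mul (dT p) (dUtx p), pd_add ((dΞx p).fun_mul (dUx p)) ((dΞ p).fun_mul (dUxx p)),
      pd_mul (dΞx p) (dUx p), pd_mul (dΞ p) (dUxx p),
      pd_sub ((dΦx p).fun_neg) (dΞxx p), pd_sub ((dΦ p).fun_neg) (dΞx p), pd_neg, pd_neg,
      pd_comp_fst (dτ p.1)]
    norm_num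
  -- derived determining equations
  have dT' : ∀ p : ℝ × ℝ, DifferentiableAt ℝ (fun q : ℝ × ℝ => deriv τ q.1) p := fun p =>
    (dτ' p.1).comp p differentiableAt_fst
  have dΞt : ∀ p, DifferentiableAt ℝ (pd (1, 0) Ξ) p := fun p =>
    (hΞt.differentiable (by simp)) p
  have hCx : ∀ q, G * pd (0, 1) (pd (0, 1) Ξ) q = 0 := by
    intro q
    have h0 := pd_congr hC (0, 1) q
    rw [pd_const, pd_sub ((differentiableAt_const _).fun_mul (dT' q)) ((differentiableAt_const _).fun_mul (dΞx q)),
      pd_const_mul (dT' q), pd_const_mul (dΞx q), pd_comp_fst (dτ' q.1)] at h0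
    linear_combination -h0
  have hCxx : ∀ q, G * pd (0, 1) (pd (0, 1) (pd (0, 1) Ξ)) q = 0 := by
    intro q
    have h0 := pd_congr hCx (0, 1) q
    rw [pd_const, pd_const_mul (dΞxx q)] at h0
    exact h0
  have hBx : ∀ q, G * pd (0, 1) (pd (0, 1) Φ) q - pd (0, 1) (pd (1, 0) Ξ) q
      - (1 / 2) * G * pd (0, 1) (pd (0, 1) (pd (0, 1) Ξ)) q - f * pd (0, 1) (pd (0, 1) Ξ) q = 0 := by
    intro q
    have h0 := pd_congr hB (0, 1) q
    rw [pd_const, pd_sub (((differentiableAt_const _).fun_mul (dΦx q)).fun_add ((differentiableAt_const _).fun_mul (dT' q)))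
        (((dΞt q).fun_add ((differentiableAt_const _).fun_mul (dΞxx q))).fun_add ((differentiableAt_const _).fun_mul (dΞx q))),
      pd_add ((differentiableAt_const _).fun_mul (dΦx q)) ((differentiableAt_const _).fun_mul (dT' q)),
      pd_add ((dΞt q).fun_add ((differentiableAt_const _).fun_mul (dΞxx q))) ((differentiableAt_const _).fun_mul (dΞx q)),
      pd_add (dΞt q) ((differentiableAt_const _).fun_mul (dΞxx q)),
      pd_const_mul (dΦx q), pd_const_mul (dT' q), pd_const_mul (dΞxx q), pd_const_mul (dΞx q),
      pd_comp_fst (dτ' q.1)] at h0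
    linear_combination h0
  -- derivatives of the PDE for U
  have hVx : ∀ q, pd (0, 1) (pd (1, 0) U) q =
      -f * pd (0, 1) (pd (0, 1) U) q + (1 / 2) * G * pd (0, 1) (pd (0, 1) (pd (0, 1) U)) q := by
    intro q
    rw [pd_congr hV (0, 1) q,
      pd_add ((differentiableAt_const _).fun_mul (dUx q)) ((differentiableAt_const _).fun_mul (dUxx q)),
      pd_const_mul (dUx q), pd_const_mul (dUxx q)]
  have hVt : ∀ q, pd (1, 0) (pd (1, 0) U) q =
      -f * pd (1, 0) (pd (0, 1) U) q + (1 / 2) * G * pd (1, 0) (pd (0, 1) (pd (0, 1) U)) q := by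
    intro q
    rw [pd_congr hV (1, 0) q,
      pd_add ((differentiableAt_const _).fun_mul (dUx q)) ((differentiableAt_const _).fun_mul (dUxx q)),
      pd_const_mul (dUx q), pd_const_mul (dUxx q)]
  -- symmetry of mixed partials
  have hUcomm : pd (1, 0) (pd (0, 1) U) = pd (0, 1) (pd (1, 0) U) :=
    funext fun q => pd_comm (hU.of_le (by norm_num)) (1, 0) (0, 1) q
  intro p
  have hΞcomm : pd (1, 0) (pd (0, 1) Ξ) p = pd (0, 1) (pd (1, 0) Ξ) p :=
    pd_comm (hΞ.of_le (wle_infty 2)) (1, 0) (0, 1) p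
  have hsym2 : pd (1, 0) (pd (0, 1) (pd (0, 1) U)) p = pd (0, 1) (pd (1, 0) (pd (0, 1) U)) p :=
    pd_comm hUx (1, 0) (0, 1) p
  rw [hZt p, hZx p, hZxx p, hVt p, hsym2, hΞcomm, hUcomm, hVx p, hV p]
  linear_combination (U p) * (hBx p - hA p + hCxx p) + pd (0, 1) U p * (hB p + 2 * hCx p)
    - pd (0, 1) (pd (0, 1) U) p * hC p

theorem deriv2_slice2 {A : ℝ × ℝ → ℝ} (hA : Differentiable ℝ A)
    (hAx : Differentiable ℝ (pd (0, 1) A)) (t x : ℝ) :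
    deriv (deriv (fun y => A (t, y))) x = pd (0, 1) (pd (0, 1) A) (t, x) := by
  have h1 : (deriv fun y => A (t, y)) = fun y => pd (0, 1) A (t, y) :=
    funext fun y => deriv_slice2 (hA (t, y))
  rw [h1]
  exact deriv_slice2 (hAx (t, x))

theorem pd_t_W (τ : ℝ → ℝ) (Φ Ξ P R S : ℝ × ℝ → ℝ) (p : ℝ × ℝ)
    (hτ : ContDiff ℝ ∞ τ) (hΦ : ContDiff ℝ ∞ Φ) (hΞ : ContDiff ℝ ∞ Ξ)
    (hP : ContDiff ℝ ∞ P) (hR : ContDiff ℝ ∞ R) (hS : ContDiff ℝ ∞ S) :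
    pd (1, 0) (fun q => Φ q * P q - τ q.1 * R q - Ξ q * S q) p =
      (pd (1, 0) Φ p * P p + Φ p * pd (1, 0) P p)
        - (deriv τ p.1 * R p + τ p.1 * pd (1, 0) R p)
        - (pd (1, 0) Ξ p * S p + Ξ p * pd (1, 0) S p) := by
  have dτ : DifferentiableAt ℝ τ p.1 := (hτ.differentiable (by simp)) p.1
  have dT : DifferentiableAt ℝ (fun q : ℝ × ℝ => τ q.1) p := dτ.comp p differentiableAt_fst
  have dΦ := (hΦ.differentiable (by simp)) p
  have dΞ := (hΞ.differentiable (by simp)) p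
  have dP := (hP.differentiable (by simp)) p
  have dR := (hR.differentiable (by simp)) p
  have dS := (hS.differentiable (by simp)) p
  rw [pd_sub ((dΦ.fun_mul dP).fun_sub (dT.fun_mul dR)) (dΞ.fun_mul dS), pd_sub (dΦ.fun_mul dP) (dT.fun_mul dR),
    pd_mul dΦ dP, pd_mul dT dR, pd_mul dΞ dS, pd_comp_fst dτ]
  norm_num

theorem pd_x_W (τ : ℝ → ℝ) (Φ Ξ P R S : ℝ × ℝ → ℝ) (p : ℝ × ℝ)
    (hτ : ContDiff ℝ ∞ τ) (hΦ : ContDiff ℝ ∞ Φ) (hΞ : ContDiff ℝ ∞ Ξ)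
    (hP : ContDiff ℝ ∞ P) (hR : ContDiff ℝ ∞ R) (hS : ContDiff ℝ ∞ S) :
    pd (0, 1) (fun q => Φ q * P q - τ q.1 * R q - Ξ q * S q) p =
      (pd (0, 1) Φ p * P p + Φ p * pd (0, 1) P p)
        - τ p.1 * pd (0, 1) R p
        - (pd (0, 1) Ξ p * S p + Ξ p * pd (0, 1) S p) := by
  have dτ : DifferentiableAt ℝ τ p.1 := (hτ.differentiable (by simp)) p.1
  have dT : DifferentiableAt ℝ (fun q : ℝ × ℝ => τ q.1) p := dτ.comp p differentiableAt_fst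
  have dΦ := (hΦ.differentiable (by simp)) p
  have dΞ := (hΞ.differentiable (by simp)) p
  have dP := (hP.differentiable (by simp)) p
  have dR := (hR.differentiable (by simp)) p
  have dS := (hS.differentiable (by simp)) p
  rw [pd_sub ((dΦ.fun_mul dP).fun_sub (dT.fun_mul dR)) (dΞ.fun_mul dS), pd_sub (dΦ.fun_mul dP) (dT.fun_mul dR),
    pd_mul dΦ dP, pd_mul dT dR, pd_mul dΞ dS, pd_comp_fst dτ]
  norm_num

theorem pd_xx_W (τ : ℝ → ℝ) (Φ Ξ P R S : ℝ × ℝ → ℝ) (p : ℝ × ℝ)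
    (hτ : ContDiff ℝ ∞ τ) (hΦ : ContDiff ℝ ∞ Φ) (hΞ : ContDiff ℝ ∞ Ξ)
    (hP : ContDiff ℝ ∞ P) (hR : ContDiff ℝ ∞ R) (hS : ContDiff ℝ ∞ S) :
    pd (0, 1) (pd (0, 1) (fun q => Φ q * P q - τ q.1 * R q - Ξ q * S q)) p =
      (pd (0, 1) (pd (0, 1) Φ) p * P p + 2 * pd (0, 1) Φ p * pd (0, 1) P p
          + Φ p * pd (0, 1) (pd (0, 1) P) p)
        - τ p.1 * pd (0, 1) (pd (0, 1) R) p
        - (pd (0, 1) (pd (0, 1) Ξ) p * S p + 2 * pd (0, 1) Ξ p * pd (0, 1) S p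
          + Ξ p * pd (0, 1) (pd (0, 1) S) p) := by
  have hx : ∀ q, pd (0, 1) (fun q => Φ q * P q - τ q.1 * R q - Ξ q * S q) q =
      (pd (0, 1) Φ q * P q + Φ q * pd (0, 1) P q)
        - τ q.1 * pd (0, 1) R q
        - (pd (0, 1) Ξ q * S q + Ξ q * pd (0, 1) S q) := fun q =>
    pd_x_W τ Φ Ξ P R S q hτ hΦ hΞ hP hR hS
  have dτ : DifferentiableAt ℝ τ p.1 := (hτ.differentiable (by simp)) p.1
  have dτ' : DifferentiableAt ℝ (deriv τ) p.1 :=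
    ((contDiff_infty_iff_deriv.mp hτ).2.differentiable (by simp)) p.1
  have dT : DifferentiableAt ℝ (fun q : ℝ × ℝ => τ q.1) p := dτ.comp p differentiableAt_fst
  have dΦ := (hΦ.differentiable (by simp)) p
  have dΞ := (hΞ.differentiable (by simp)) p
  have dP := (hP.differentiable (by simp)) p
  have dR := (hR.differentiable (by simp)) p
  have dS := (hS.differentiable (by simp)) p
  have dΦx := ((pd_contDiff hΦ (by simp) (0, 1)).differentiable (n := ∞) (by simp)) p
  have dΞx := ((pd_contDiff hΞ (by simp) (0, 1)).differentiable (n := ∞) (by simp)) p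
  have dPx := ((pd_contDiff hP (by simp) (0, 1)).differentiable (n := ∞) (by simp)) p
  have dRx := ((pd_contDiff hR (by simp) (0, 1)).differentiable (n := ∞) (by simp)) p
  have dSx := ((pd_contDiff hS (by simp) (0, 1)).differentiable (n := ∞) (by simp)) p
  rw [pd_congr hx (0, 1) p]
  rw [show (fun q => (pd (0, 1) Φ q * P q + Φ q * pd (0, 1) P q) - τ q.1 * pd (0, 1) R q
      - (pd (0, 1) Ξ q * S q + Ξ q * pd (0, 1) S q)) = fun q =>
      (((fun q => pd (0, 1) Φ q * P q + Φ q * pd (0, 1) P q) q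
        - (fun q => τ q.1 * pd (0, 1) R q) q)
        - (fun q => pd (0, 1) Ξ q * S q + Ξ q * pd (0, 1) S q) q) from rfl]
  rw [pd_sub (((dΦx.fun_mul dP).fun_add (dΦ.fun_mul dPx)).fun_sub (dT.fun_mul dRx)) ((dΞx.fun_mul dS).fun_add (dΞ.fun_mul dSx)),
    pd_sub ((dΦx.fun_mul dP).fun_add (dΦ.fun_mul dPx)) (dT.fun_mul dRx),
    pd_add (dΦx.fun_mul dP) (dΦ.fun_mul dPx), pd_add (dΞx.fun_mul dS) (dΞ.fun_mul dSx),
    pd_mul dΦx dP, pd_mul dΦ dPx, pd_mul dT dRx, pd_mul dΞx dS, pd_mul dΞ dSx,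
    pd_comp_fst dτ]
  norm_num
  ring

theorem determining (f G : ℝ) (τ : ℝ → ℝ) (ξ φ : ℝ → ℝ → ℝ)
    (hτ : ContDiff ℝ ∞ τ) (hξ : ContDiff ℝ ∞ (Function.uncurry ξ))
    (hφ : ContDiff ℝ ∞ (Function.uncurry φ))
    (hsym : ∀ u : ℝ → ℝ → ℝ, ContDiff ℝ 3 (Function.uncurry u) →
      (∀ t x : ℝ,
        deriv (fun s => u s x) t + (1 / 2) * G * deriv (deriv (fun y => u t y)) x +
          f * deriv (fun y => u t y) x = 0) →
      (∀ t x : ℝ,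
        deriv (fun s => φ s x * u s x - τ s * deriv (fun r => u r x) s -
            ξ s x * deriv (fun y => u s y) x) t +
        (1 / 2) * G * deriv (deriv (fun y => φ t y * u t y - τ t * deriv (fun r => u r y) t -
            ξ t y * deriv (fun z => u t z) y)) x +
        f * deriv (fun y => φ t y * u t y - τ t * deriv (fun r => u r y) t -
            ξ t y * deriv (fun z => u t z) y) x = 0)) :
    (∀ p, pd (1, 0) (Function.uncurry φ) p +
        (1 / 2) * G * pd (0, 1) (pd (0, 1) (Function.uncurry φ)) p +
        f * pd (0, 1) (Function.uncurry φ) p = 0) ∧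
    (∀ p, G * pd (0, 1) (Function.uncurry φ) p + f * deriv τ p.1 -
        (pd (1, 0) (Function.uncurry ξ) p +
          (1 / 2) * G * pd (0, 1) (pd (0, 1) (Function.uncurry ξ)) p +
          f * pd (0, 1) (Function.uncurry ξ) p) = 0) ∧
    (∀ p, (1 / 2) * G * deriv τ p.1 - G * pd (0, 1) (Function.uncurry ξ) p = 0) := by
  have dΦ : Differentiable ℝ (Function.uncurry φ) := hφ.differentiable (by simp)
  have hΦx : ContDiff ℝ ∞ (pd (0, 1) (Function.uncurry φ)) := pd_contDiff hφ (by simp) _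
  have dΦx : Differentiable ℝ (pd (0, 1) (Function.uncurry φ)) := hΦx.differentiable (by simp)
  -- Step 1 : constant solution u = 1 gives equation (A)
  have E1 := hsym (fun _ _ => (1 : ℝ)) contDiff_const (by intro t x; simp)
  simp only [deriv_const', mul_one, mul_zero, sub_zero] at E1
  have hA : ∀ p, pd (1, 0) (Function.uncurry φ) p +
      (1 / 2) * G * pd (0, 1) (pd (0, 1) (Function.uncurry φ)) p +
      f * pd (0, 1) (Function.uncurry φ) p = 0 := by
    rintro ⟨t, x⟩
    have c1 : deriv (fun s => φ s x) t = pd (1, 0) (Function.uncurry φ) (t, x) :=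
      deriv_slice1 (dΦ (t, x))
    have c2 : deriv (fun y => φ t y) x = pd (0, 1) (Function.uncurry φ) (t, x) :=
      deriv_slice2 (dΦ (t, x))
    have c3 : deriv (deriv (fun y => φ t y)) x =
        pd (0, 1) (pd (0, 1) (Function.uncurry φ)) (t, x) := deriv2_slice2 dΦ dΦx t x
    have := E1 t x
    rw [c1, c2, c3] at this
    exact this
  -- Step 2 : the solution u = x - f t gives equation (B)
  have hd2t : ∀ (s x : ℝ), deriv (fun r => x - f * r) s = -f := by
    intro s x
    have h := ((hasDerivAt_const s x).fun_sub (HasDerivAt.const_mul f (hasDerivAt_id' _))).deriv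
    rw [h]; ring
  have hd2x : ∀ (s x : ℝ), deriv (fun y => y - f * s) x = 1 := by
    intro s x
    have h := ((hasDerivAt_id' _).fun_sub (hasDerivAt_const x (f * s))).deriv
    rw [h]; ring
  have hsm2 : ContDiff ℝ 3 (Function.uncurry fun t x => x - f * t) :=
    contDiff_snd.sub (contDiff_const.mul contDiff_fst)
  have hsol2 : ∀ t x : ℝ,
      deriv (fun s => (fun t x => x - f * t) s x) t
        + (1 / 2) * G * deriv (deriv (fun y => (fun t x => x - f * t) t y)) x
        + f * deriv (fun y => (fun t x => x - f * t) t y) x = 0 := by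
    intro t x
    show deriv (fun s => x - f * s) t + (1 / 2) * G * deriv (deriv (fun y => y - f * t)) x
      + f * deriv (fun y => y - f * t) x = 0
    rw [hd2t t x, show (deriv fun y => y - f * t) = fun _ => (1 : ℝ) from funext (hd2x t)]
    simp
  have E2 := hsym (fun t x => x - f * t) hsm2 hsol2
  simp only [hd2t, hd2x] at E2
  have hP2t : ∀ p : ℝ × ℝ, pd (1, 0) (fun q : ℝ × ℝ => q.2 - f * q.1) p = -f := by
    intro p
    rw [pd_sub differentiableAt_snd ((differentiableAt_const f).fun_mul differentiableAt_fst),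
      pd_snd, pd_const_mul differentiableAt_fst, pd_fst]
    norm_num
  have hP2x : ∀ p : ℝ × ℝ, pd (0, 1) (fun q : ℝ × ℝ => q.2 - f * q.1) p = 1 := by
    intro p
    rw [pd_sub differentiableAt_snd ((differentiableAt_const f).fun_mul differentiableAt_fst),
      pd_snd, pd_const_mul differentiableAt_fst, pd_fst]
    norm_num
  have hP2xx : ∀ p : ℝ × ℝ, pd (0, 1) (pd (0, 1) (fun q : ℝ × ℝ => q.2 - f * q.1)) p = 0 := by
    intro p
    rw [pd_congr hP2x (0, 1) p, pd_const]
  have hP2 : ContDiff ℝ ∞ (fun q : ℝ × ℝ => q.2 - f * q.1) :=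
    contDiff_snd.sub (contDiff_const.mul contDiff_fst)
  have hW2 : ContDiff ℝ ∞ (fun q : ℝ × ℝ =>
      Function.uncurry φ q * (q.2 - f * q.1) - τ q.1 * -f - Function.uncurry ξ q * 1) :=
    ((hφ.mul hP2).sub ((hτ.comp contDiff_fst).mul contDiff_const)).sub (hξ.mul contDiff_const)
  have dW2 : Differentiable ℝ (fun q : ℝ × ℝ =>
      Function.uncurry φ q * (q.2 - f * q.1) - τ q.1 * -f - Function.uncurry ξ q * 1) :=
    hW2.differentiable (by simp)
  have dW2x : Differentiable ℝ (pd (0, 1) (fun q : ℝ × ℝ =>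
      Function.uncurry φ q * (q.2 - f * q.1) - τ q.1 * -f - Function.uncurry ξ q * 1)) :=
    (pd_contDiff hW2 (by simp) _).differentiable (n := ∞) (by simp)
  have hB : ∀ p, G * pd (0, 1) (Function.uncurry φ) p + f * deriv τ p.1 -
      (pd (1, 0) (Function.uncurry ξ) p +
        (1 / 2) * G * pd (0, 1) (pd (0, 1) (Function.uncurry ξ)) p +
        f * pd (0, 1) (Function.uncurry ξ) p) = 0 := by
    intro p
    have h0 := E2 p.1 p.2
    have c1 : deriv (fun s => φ s p.2 * (p.2 - f * s) - τ s * -f - ξ s p.2 * 1) p.1 =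
        pd (1, 0) (fun q : ℝ × ℝ =>
          Function.uncurry φ q * (q.2 - f * q.1) - τ q.1 * -f - Function.uncurry ξ q * 1) p :=
      deriv_slice1 (dW2 p)
    have c2 : deriv (fun y => φ p.1 y * (y - f * p.1) - τ p.1 * -f - ξ p.1 y * 1) p.2 =
        pd (0, 1) (fun q : ℝ × ℝ =>
          Function.uncurry φ q * (q.2 - f * q.1) - τ q.1 * -f - Function.uncurry ξ q * 1) p :=
      deriv_slice2 (dW2 p)
    have c3 : deriv (deriv (fun y => φ p.1 y * (y - f * p.1) - τ p.1 * -f - ξ p.1 y * 1)) p.2 =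
        pd (0, 1) (pd (0, 1) (fun q : ℝ × ℝ =>
          Function.uncurry φ q * (q.2 - f * q.1) - τ q.1 * -f - Function.uncurry ξ q * 1)) p :=
      deriv2_slice2 dW2 dW2x p.1 p.2
    rw [c1, c2, c3] at h0
    rw [pd_t_W τ (Function.uncurry φ) (Function.uncurry ξ) (fun q : ℝ × ℝ => q.2 - f * q.1)
        (fun _ => -f) (fun _ => (1 : ℝ)) p hτ hφ hξ hP2 contDiff_const contDiff_const,
      pd_x_W τ (Function.uncurry φ) (Function.uncurry ξ) (fun q : ℝ × ℝ => q.2 - f * q.1)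
        (fun _ => -f) (fun _ => (1 : ℝ)) p hτ hφ hξ hP2 contDiff_const contDiff_const,
      pd_xx_W τ (Function.uncurry φ) (Function.uncurry ξ) (fun q : ℝ × ℝ => q.2 - f * q.1)
        (fun _ => -f) (fun _ => (1 : ℝ)) p hτ hφ hξ hP2 contDiff_const contDiff_const] at h0
    simp only [hP2t, hP2x, hP2xx, pd_const, pd_pd_const] at h0
    linear_combination h0 - (p.2 - f * p.1) * hA p
  -- Step 3 : the solution u = (x - f t)^2 - G t gives equation (C)
  have hd3t : ∀ (s y : ℝ), deriv (fun r => (y - f * r) * (y - f * r) - G * r) s =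
      -(2 * f) * (y - f * s) - G := by
    intro s y
    have hy : HasDerivAt (fun r : ℝ => y - f * r) (0 - f * 1) s :=
      (hasDerivAt_const s y).fun_sub (HasDerivAt.const_mul f (hasDerivAt_id' _))
    have h := ((hy.fun_mul hy).fun_sub (HasDerivAt.const_mul G (hasDerivAt_id' _))).deriv
    rw [h]; ring
  have hd3x : ∀ (s y : ℝ), deriv (fun z => (z - f * s) * (z - f * s) - G * s) y =
      2 * (y - f * s) := by
    intro s y
    have hz : HasDerivAt (fun z : ℝ => z - f * s) (1 - 0) y :=
      (hasDerivAt_id' _).fun_sub (hasDerivAt_const y (f * s))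
    have h := ((hz.fun_mul hz).fun_sub (hasDerivAt_const y (G * s))).deriv
    rw [h]; ring
  have hd3x2 : ∀ (t x : ℝ), deriv (fun y => 2 * (y - f * t)) x = 2 := by
    intro t x
    have h := (HasDerivAt.const_mul 2 ((hasDerivAt_id' _).fun_sub (hasDerivAt_const x (f * t)))).deriv
    rw [h]; ring
  have hP3 : ContDiff ℝ ∞ (fun q : ℝ × ℝ => (q.2 - f * q.1) * (q.2 - f * q.1) - G * q.1) :=
    ((contDiff_snd.sub (contDiff_const.mul contDiff_fst)).mul
      (contDiff_snd.sub (contDiff_const.mul contDiff_fst))).sub (contDiff_const.mul contDiff_fst)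
  have hR3 : ContDiff ℝ ∞ (fun q : ℝ × ℝ => -(2 * f) * (q.2 - f * q.1) - G) :=
    (contDiff_const.mul (contDiff_snd.sub (contDiff_const.mul contDiff_fst))).sub contDiff_const
  have hS3 : ContDiff ℝ ∞ (fun q : ℝ × ℝ => 2 * (q.2 - f * q.1)) :=
    contDiff_const.mul (contDiff_snd.sub (contDiff_const.mul contDiff_fst))
  have hsm3 : ContDiff ℝ 3 (Function.uncurry fun t x => (x - f * t) * (x - f * t) - G * t) :=
    hP3.of_le (wle_infty 3)
  have hsol3 : ∀ t x : ℝ,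
      deriv (fun s => (fun t x => (x - f * t) * (x - f * t) - G * t) s x) t
        + (1 / 2) * G * deriv (deriv (fun y =>
            (fun t x => (x - f * t) * (x - f * t) - G * t) t y)) x
        + f * deriv (fun y => (fun t x => (x - f * t) * (x - f * t) - G * t) t y) x = 0 := by
    intro t x
    show deriv (fun s => (x - f * s) * (x - f * s) - G * s) t
      + (1 / 2) * G * deriv (deriv (fun y => (y - f * t) * (y - f * t) - G * t)) x
      + f * deriv (fun y => (y - f * t) * (y - f * t) - G * t) x = 0
    rw [hd3t t x, hd3x t x, show (deriv fun y => (y - f * t) * (y - f * t) - G * t) =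
        fun y => 2 * (y - f * t) from funext (hd3x t), hd3x2 t x]
    ring
  have E3 := hsym (fun t x => (x - f * t) * (x - f * t) - G * t) hsm3 hsol3
  simp only [hd3t, hd3x] at E3
  have d1 : ∀ p : ℝ × ℝ, DifferentiableAt ℝ (fun q : ℝ × ℝ => q.2 - f * q.1) p := fun p =>
    differentiableAt_snd.fun_sub ((differentiableAt_const f).fun_mul differentiableAt_fst)
  have hP3t : ∀ p : ℝ × ℝ,
      pd (1, 0) (fun q : ℝ × ℝ => (q.2 - f * q.1) * (q.2 - f * q.1) - G * q.1) p =
      -(2 * f) * (p.2 - f * p.1) - G := by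
    intro p
    rw [pd_sub ((d1 p).fun_mul (d1 p)) ((differentiableAt_const G).fun_mul differentiableAt_fst),
      pd_mul (d1 p) (d1 p), pd_const_mul differentiableAt_fst, pd_fst, hP2t p]
    ring
  have hP3x : ∀ p : ℝ × ℝ,
      pd (0, 1) (fun q : ℝ × ℝ => (q.2 - f * q.1) * (q.2 - f * q.1) - G * q.1) p =
      2 * (p.2 - f * p.1) := by
    intro p
    rw [pd_sub ((d1 p).fun_mul (d1 p)) ((differentiableAt_const G).fun_mul differentiableAt_fst),
      pd_mul (d1 p) (d1 p), pd_const_mul differentiableAt_fst, pd_fst, hP2x p]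
    ring
  have hP3xx : ∀ p : ℝ × ℝ,
      pd (0, 1) (pd (0, 1) (fun q : ℝ × ℝ => (q.2 - f * q.1) * (q.2 - f * q.1) - G * q.1)) p =
      2 := by
    intro p
    rw [pd_congr hP3x (0, 1) p, pd_const_mul (d1 p), hP2x p]
    ring
  have hR3t : ∀ p : ℝ × ℝ,
      pd (1, 0) (fun q : ℝ × ℝ => -(2 * f) * (q.2 - f * q.1) - G) p = 2 * (f * f) := by
    intro p
    rw [pd_sub ((differentiableAt_const _).fun_mul (d1 p)) (differentiableAt_const G),
      pd_const, pd_const_mul (d1 p), hP2t p]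
    ring
  have hR3x : ∀ p : ℝ × ℝ,
      pd (0, 1) (fun q : ℝ × ℝ => -(2 * f) * (q.2 - f * q.1) - G) p = -(2 * f) := by
    intro p
    rw [pd_sub ((differentiableAt_const _).fun_mul (d1 p)) (differentiableAt_const G),
      pd_const, pd_const_mul (d1 p), hP2x p]
    ring
  have hR3xx : ∀ p : ℝ × ℝ,
      pd (0, 1) (pd (0, 1) (fun q : ℝ × ℝ => -(2 * f) * (q.2 - f * q.1) - G)) p = 0 := by
    intro p
    rw [pd_congr hR3x (0, 1) p, pd_const]
  have hS3t : ∀ p : ℝ × ℝ,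
      pd (1, 0) (fun q : ℝ × ℝ => 2 * (q.2 - f * q.1)) p = -(2 * f) := by
    intro p
    rw [pd_const_mul (d1 p), hP2t p]
    ring
  have hS3x : ∀ p : ℝ × ℝ,
      pd (0, 1) (fun q : ℝ × ℝ => 2 * (q.2 - f * q.1)) p = 2 := by
    intro p
    rw [pd_const_mul (d1 p), hP2x p]
    ring
  have hS3xx : ∀ p : ℝ × ℝ,
      pd (0, 1) (pd (0, 1) (fun q : ℝ × ℝ => 2 * (q.2 - f * q.1))) p = 0 := by
    intro p
    rw [pd_congr hS3x (0, 1) p, pd_const]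
  have hW3 : ContDiff ℝ ∞ (fun q : ℝ × ℝ =>
      Function.uncurry φ q * ((q.2 - f * q.1) * (q.2 - f * q.1) - G * q.1)
        - τ q.1 * (-(2 * f) * (q.2 - f * q.1) - G)
        - Function.uncurry ξ q * (2 * (q.2 - f * q.1))) :=
    ((hφ.mul hP3).sub ((hτ.comp contDiff_fst).mul hR3)).sub (hξ.mul hS3)
  have dW3 : Differentiable ℝ (fun q : ℝ × ℝ =>
      Function.uncurry φ q * ((q.2 - f * q.1) * (q.2 - f * q.1) - G * q.1)
        - τ q.1 * (-(2 * f) * (q.2 - f * q.1) - G)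
        - Function.uncurry ξ q * (2 * (q.2 - f * q.1))) :=
    hW3.differentiable (by simp)
  have dW3x : Differentiable ℝ (pd (0, 1) (fun q : ℝ × ℝ =>
      Function.uncurry φ q * ((q.2 - f * q.1) * (q.2 - f * q.1) - G * q.1)
        - τ q.1 * (-(2 * f) * (q.2 - f * q.1) - G)
        - Function.uncurry ξ q * (2 * (q.2 - f * q.1)))) :=
    (pd_contDiff hW3 (by simp) _).differentiable (n := ∞) (by simp)
  have hC : ∀ p : ℝ × ℝ, (1 / 2) * G * deriv τ p.1 - G * pd (0, 1) (Function.uncurry ξ) p = 0 := by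
    intro p
    have h0 := E3 p.1 p.2
    have c1 : deriv (fun s => φ s p.2 * ((p.2 - f * s) * (p.2 - f * s) - G * s)
          - τ s * (-(2 * f) * (p.2 - f * s) - G) - ξ s p.2 * (2 * (p.2 - f * s))) p.1 =
        pd (1, 0) (fun q : ℝ × ℝ =>
          Function.uncurry φ q * ((q.2 - f * q.1) * (q.2 - f * q.1) - G * q.1)
            - τ q.1 * (-(2 * f) * (q.2 - f * q.1) - G)
            - Function.uncurry ξ q * (2 * (q.2 - f * q.1))) p :=
      deriv_slice1 (dW3 p)
    have c2 : deriv (fun y => φ p.1 y * ((y - f * p.1) * (y - f * p.1) - G * p.1)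
          - τ p.1 * (-(2 * f) * (y - f * p.1) - G) - ξ p.1 y * (2 * (y - f * p.1))) p.2 =
        pd (0, 1) (fun q : ℝ × ℝ =>
          Function.uncurry φ q * ((q.2 - f * q.1) * (q.2 - f * q.1) - G * q.1)
            - τ q.1 * (-(2 * f) * (q.2 - f * q.1) - G)
            - Function.uncurry ξ q * (2 * (q.2 - f * q.1))) p :=
      deriv_slice2 (dW3 p)
    have c3 : deriv (deriv (fun y => φ p.1 y * ((y - f * p.1) * (y - f * p.1) - G * p.1)
          - τ p.1 * (-(2 * f) * (y - f * p.1) - G) - ξ p.1 y * (2 * (y - f * p.1)))) p.2 =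
        pd (0, 1) (pd (0, 1) (fun q : ℝ × ℝ =>
          Function.uncurry φ q * ((q.2 - f * q.1) * (q.2 - f * q.1) - G * q.1)
            - τ q.1 * (-(2 * f) * (q.2 - f * q.1) - G)
            - Function.uncurry ξ q * (2 * (q.2 - f * q.1)))) p :=
      deriv2_slice2 dW3 dW3x p.1 p.2
    rw [c1, c2, c3] at h0
    rw [pd_t_W τ (Function.uncurry φ) (Function.uncurry ξ)
        (fun q : ℝ × ℝ => (q.2 - f * q.1) * (q.2 - f * q.1) - G * q.1)
        (fun q : ℝ × ℝ => -(2 * f) * (q.2 - f * q.1) - G)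
        (fun q : ℝ × ℝ => 2 * (q.2 - f * q.1)) p hτ hφ hξ hP3 hR3 hS3,
      pd_x_W τ (Function.uncurry φ) (Function.uncurry ξ)
        (fun q : ℝ × ℝ => (q.2 - f * q.1) * (q.2 - f * q.1) - G * q.1)
        (fun q : ℝ × ℝ => -(2 * f) * (q.2 - f * q.1) - G)
        (fun q : ℝ × ℝ => 2 * (q.2 - f * q.1)) p hτ hφ hξ hP3 hR3 hS3,
      pd_xx_W τ (Function.uncurry φ) (Function.uncurry ξ)
        (fun q : ℝ × ℝ => (q.2 - f * q.1) * (q.2 - f * q.1) - G * q.1)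
        (fun q : ℝ × ℝ => -(2 * f) * (q.2 - f * q.1) - G)
        (fun q : ℝ × ℝ => 2 * (q.2 - f * q.1)) p hτ hφ hξ hP3 hR3 hS3] at h0
    simp only [hP3t, hP3x, hP3xx, hR3t, hR3x, hR3xx, hS3t, hS3x, hS3xx] at h0
    linear_combination (1 / 2) * h0
      - (1 / 2) * ((p.2 - f * p.1) * (p.2 - f * p.1) - G * p.1) * hA p
      - (p.2 - f * p.1) * hB p
  exact ⟨hA, hB, hC⟩

theorem stmt_15 (f G : ℝ) (τ : ℝ → ℝ) (ξ φ : ℝ → ℝ → ℝ)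
    (hτ : ContDiff ℝ (⊤ : ℕ∞) τ) (hξ : ContDiff ℝ (⊤ : ℕ∞) (Function.uncurry ξ))
    (hφ : ContDiff ℝ (⊤ : ℕ∞) (Function.uncurry φ))
    (hsym : ∀ u : ℝ → ℝ → ℝ, ContDiff ℝ 3 (Function.uncurry u) →
      (∀ t x : ℝ,
        deriv (fun s => u s x) t + (1 / 2) * G * deriv (deriv (fun y => u t y)) x +
          f * deriv (fun y => u t y) x = 0) →
      (∀ t x : ℝ,
        deriv (fun s => φ s x * u s x - τ s * deriv (fun r => u r x) s -
            ξ s x * deriv (fun y => u s y) x) t +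
        (1 / 2) * G * deriv (deriv (fun y => φ t y * u t y - τ t * deriv (fun r => u r y) t -
            ξ t y * deriv (fun z => u t z) y)) x +
        f * deriv (fun y => φ t y * u t y - τ t * deriv (fun r => u r y) t -
            ξ t y * deriv (fun z => u t z) y) x = 0)) :
    ∀ v : ℝ → ℝ → ℝ, ContDiff ℝ 3 (Function.uncurry v) →
      (∀ t x : ℝ,
        deriv (fun s => v s x) t =
          -f * deriv (fun y => v t y) x + (1 / 2) * G * deriv (deriv (fun y => v t y)) x) →
      (∀ t x : ℝ,
        deriv (fun s => (-φ s x - deriv (fun y => ξ s y) x) * v s x -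
            τ s * deriv (fun r => v r x) s - ξ s x * deriv (fun y => v s y) x) t =
        -f * deriv (fun y => (-φ t y - deriv (fun z => ξ t z) y) * v t y -
            τ t * deriv (fun r => v r y) t - ξ t y * deriv (fun z => v t z) y) x +
        (1 / 2) * G * deriv (deriv (fun y => (-φ t y - deriv (fun z => ξ t z) y) * v t y -
            τ t * deriv (fun r => v r y) t - ξ t y * deriv (fun z => v t z) y)) x) := by
  intro v hv hveq t x
  have hτ' : ContDiff ℝ ∞ τ := hτ.of_le (by simp)
  have hξ' : ContDiff ℝ ∞ (Function.uncurry ξ) := hξ.of_le (by simp)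
  have hφ' : ContDiff ℝ ∞ (Function.uncurry φ) := hφ.of_le (by simp)
  obtain ⟨hA, hB, hC⟩ := determining f G τ ξ φ hτ' hξ' hφ' hsym
  have dU : Differentiable ℝ (Function.uncurry v) := hv.differentiable (by norm_num)
  have hUx2 : ContDiff ℝ 2 (pd (0, 1) (Function.uncurry v)) := pd_contDiff hv (by norm_num) _
  have hUt2 : ContDiff ℝ 2 (pd (1, 0) (Function.uncurry v)) := pd_contDiff hv (by norm_num) _
  have dUx : Differentiable ℝ (pd (0, 1) (Function.uncurry v)) :=
    hUx2.differentiable (by norm_num)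
  have hV : ∀ p, pd (1, 0) (Function.uncurry v) p =
      -f * pd (0, 1) (Function.uncurry v) p +
        (1 / 2) * G * pd (0, 1) (pd (0, 1) (Function.uncurry v)) p := by
    intro p
    have h0 := hveq p.1 p.2
    have c1 : deriv (fun s => v s p.2) p.1 = pd (1, 0) (Function.uncurry v) p :=
      deriv_slice1 (dU p)
    have c2 : deriv (fun y => v p.1 y) p.2 = pd (0, 1) (Function.uncurry v) p :=
      deriv_slice2 (dU p)
    have c3 : deriv (deriv (fun y => v p.1 y)) p.2 =
        pd (0, 1) (pd (0, 1) (Function.uncurry v)) p := deriv2_slice2 dU dUx p.1 p.2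
    rw [c1, c2, c3] at h0
    exact h0
  have key := forward_calc f G τ (Function.uncurry φ) (Function.uncurry ξ) (Function.uncurry v)
    hτ' hξ' hφ' hv hA hB hC hV (t, x)
  -- smoothness of Z
  have hΦ2 : ContDiff ℝ 2 (Function.uncurry φ) := hφ'.of_le (wle_infty 2)
  have hΞ2 : ContDiff ℝ 2 (Function.uncurry ξ) := hξ'.of_le (wle_infty 2)
  have hΞx2 : ContDiff ℝ 2 (pd (0, 1) (Function.uncurry ξ)) :=
    (pd_contDiff hξ' (by simp) (0, 1)).of_le (wle_infty 2)
  have hU2 : ContDiff ℝ 2 (Function.uncurry v) := hv.of_le (by norm_num)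
  have hT2 : ContDiff ℝ 2 (fun q : ℝ × ℝ => τ q.1) := (hτ'.of_le (wle_infty 2)).comp contDiff_fst
  have hZ : ContDiff ℝ 2
      (Zfun f τ (Function.uncurry φ) (Function.uncurry ξ) (Function.uncurry v)) :=
    ((((hΦ2.neg).sub hΞx2).mul hU2).sub (hT2.mul hUt2)).sub (hΞ2.mul hUx2)
  have dZ : Differentiable ℝ
      (Zfun f τ (Function.uncurry φ) (Function.uncurry ξ) (Function.uncurry v)) :=
    hZ.differentiable (by norm_num)
  have dZx : Differentiable ℝ (pd (0, 1)
      (Zfun f τ (Function.uncurry φ) (Function.uncurry ξ) (Function.uncurry v))) :=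
    (pd_contDiff (m := 1) hZ (by norm_num) _).differentiable (by norm_num)
  have e1 : ∀ (s x : ℝ), deriv (fun y => ξ s y) x = pd (0, 1) (Function.uncurry ξ) (s, x) :=
    fun s x => deriv_slice2 ((hξ'.differentiable (by simp)) (s, x))
  have e2 : ∀ (s x : ℝ), deriv (fun r => v r x) s = pd (1, 0) (Function.uncurry v) (s, x) :=
    fun s x => deriv_slice1 (dU (s, x))
  have e3 : ∀ (s x : ℝ), deriv (fun y => v s y) x = pd (0, 1) (Function.uncurry v) (s, x) :=
    fun s x => deriv_slice2 (dU (s, x))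
  simp only [e1, e2, e3]
  have g1 : deriv (fun s => (-φ s x - pd (0, 1) (Function.uncurry ξ) (s, x)) * v s x -
        τ s * pd (1, 0) (Function.uncurry v) (s, x) -
        ξ s x * pd (0, 1) (Function.uncurry v) (s, x)) t =
      pd (1, 0) (Zfun f τ (Function.uncurry φ) (Function.uncurry ξ) (Function.uncurry v)) (t, x) :=
    deriv_slice1 (dZ (t, x))
  have g2 : deriv (fun y => (-φ t y - pd (0, 1) (Function.uncurry ξ) (t, y)) * v t y -
        τ t * pd (1, 0) (Function.uncurry v) (t, y) -
        ξ t y * pd (0, 1) (Function.uncurry v) (t, y)) x =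
      pd (0, 1) (Zfun f τ (Function.uncurry φ) (Function.uncurry ξ) (Function.uncurry v)) (t, x) :=
    deriv_slice2 (dZ (t, x))
  have g3 : deriv (deriv (fun y => (-φ t y - pd (0, 1) (Function.uncurry ξ) (t, y)) * v t y -
        τ t * pd (1, 0) (Function.uncurry v) (t, y) -
        ξ t y * pd (0, 1) (Function.uncurry v) (t, y))) x =
      pd (0, 1) (pd (0, 1)
        (Zfun f τ (Function.uncurry φ) (Function.uncurry ξ) (Function.uncurry v))) (t, x) :=
    deriv2_slice2 dZ dZx t x
  rw [g1, g2, g3]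
  exact key
end
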